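/- Let P1, P2 be SPARQL graph patterns containing no UNION and no OPT subpattern, and let G be an RDF graph. Then a solution mapping μ belongs to ⟦AND(P1,P2)⟧_G if and only if dom(μ) = sv(P1) ∪ sv(P2), the restriction of μ to sv(P1) belongs to ⟦P1⟧_G, and the restriction of μ to sv(P2) belongs to ⟦P2⟧_G. -/
import Mathlib


/-!
Formalization of SPARQL graph-pattern syntax and semantics, following
Pérez et al. and the paper "SPARQL in N3".

* IRIs, blank nodes and literals are three pairwise disjoint infinite sets,
  packaged in the type `RTerm` (the set `T = I ∪ B ∪ L`).
* Variables form a further disjoint infinite set `Var`.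
* A pattern term (`PTerm`) is an element of `T ∪ V`.
* A solution mapping is a partial function from variables to RDF terms,
  modeled as `Var → Option RTerm`.
-/

namespace SparqlN3

/-- RDF terms: IRIs, blank nodes, literals — three disjoint infinite sets. -/
inductive RTerm : Type
  | iri : ℕ → RTerm
  | bnode : ℕ → RTerm
  | lit : ℕ → RTerm
deriving DecidableEq

/-- Variables (an infinite set, disjoint from `RTerm` by typing). -/
abbrev Var : Type := ℕ

/-- Elements of `T ∪ V`. -/
abbrev PTerm : Type := RTerm ⊕ Var

/-- Triple patterns: elements of `(T ∪ V) × (T ∪ V) × (T ∪ V)`. -/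
abbrev TriplePat : Type := PTerm × PTerm × PTerm

/-- Ground RDF triples. -/
abbrev Triple : Type := RTerm × RTerm × RTerm

/-- An RDF graph: a set of triples. -/
abbrev Graph : Type := Set Triple

/-- A basic graph pattern: a finite set of triple patterns. -/
abbrev BGP : Type := Finset TriplePat

/-- A (partial) mapping from variables to RDF terms. -/
abbrev Mapping : Type := Var → Option RTerm

/-- The domain of a mapping. -/
def mdom (μ : Mapping) : Set Var := {x | μ x ≠ none}

/-- A solution mapping has a finite domain. -/
def FiniteDom (μ : Mapping) : Prop := (mdom μ).Finite

/-- Compatibility of two mappings: they agree on the common domain. -/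
def compat (μ₁ μ₂ : Mapping) : Prop :=
  ∀ x a b, μ₁ x = some a → μ₂ x = some b → a = b

/-- Union `μ₁ ∪ μ₂` of two (compatible) mappings. -/
def munion (μ₁ μ₂ : Mapping) : Mapping :=
  fun x => (μ₁ x).elim (μ₂ x) some

def varsPT : PTerm → Finset Var
  | .inl _ => ∅
  | .inr v => {v}

/-- Variables of a triple pattern. -/
def varsTP (t : TriplePat) : Finset Var :=
  varsPT t.1 ∪ varsPT t.2.1 ∪ varsPT t.2.2

/-- Variables of a BGP. -/
def varsBGP (P : BGP) : Finset Var := P.biUnion varsTP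

/-- Substitution on a pattern term: replace variables in the domain of `μ`. -/
def substPT (μ : Mapping) : PTerm → PTerm
  | .inl t => .inl t
  | .inr v => (μ v).elim (.inr v) .inl

/-- Substitution `tμ` on a triple pattern (componentwise). -/
def substTP (μ : Mapping) (t : TriplePat) : TriplePat :=
  (substPT μ t.1, substPT μ t.2.1, substPT μ t.2.2)

/-- Substitution `Pμ` on a BGP (literal replacement of variables in `dom μ`). -/
def substBGP (μ : Mapping) (P : BGP) : BGP := P.image (substTP μ)

/-- View a ground triple as a triple pattern. -/
def toPat (t : Triple) : TriplePat := (.inl t.1, .inl t.2.1, .inl t.2.2)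

/-- `InstIn G μ P` : the instantiation `Pμ` is contained in `G`
(every triple pattern of `P` becomes, under `μ`, a ground triple of `G`). -/
def InstIn (G : Graph) (μ : Mapping) (P : BGP) : Prop :=
  ∀ tp ∈ P, ∃ t ∈ G, substTP μ tp = toPat t

/-- Evaluation of a BGP: `⟦P⟧_G = {μ | dom(μ) = var(P) ∧ Pμ ⊆ G}`. -/
def bgpEval (G : Graph) (P : BGP) : Set Mapping :=
  {μ | mdom μ = ↑(varsBGP P) ∧ InstIn G μ P}

/-- SPARQL graph patterns.  Filter conditions are modeled as predicates
on solution mappings. -/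
inductive GP : Type
  | bgp : BGP → GP
  | and : GP → GP → GP
  | union : GP → GP → GP
  | minus : GP → GP → GP
  | fe : GP → GP → GP
  | fne : GP → GP → GP
  | filter : GP → (Mapping → Prop) → GP
  | opt : GP → GP → (Mapping → Prop) → GP

/-- Substitution `Pμ` on a graph pattern, applied componentwise to triple
patterns and recursively through the constructors; for filters, the
predicate is composed with `μ`. -/
def substGP (μ : Mapping) : GP → GP
  | .bgp P => .bgp (substBGP μ P)
  | .and P₁ P₂ => .and (substGP μ P₁) (substGP μ P₂)
  | .union P₁ P₂ => .union (substGP μ P₁) (substGP μ P₂)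
  | .minus P₁ P₂ => .minus (substGP μ P₁) (substGP μ P₂)
  | .fe P₁ P₂ => .fe (substGP μ P₁) (substGP μ P₂)
  | .fne P₁ P₂ => .fne (substGP μ P₁) (substGP μ P₂)
  | .filter P R => .filter (substGP μ P) (fun ν => R (munion μ ν))
  | .opt P₁ P₂ R => .opt (substGP μ P₁) (substGP μ P₂) (fun ν => R (munion μ ν))

/-- Structural depth (used as termination measure for `eval`). -/
def depth : GP → ℕ
  | .bgp _ => 0
  | .and P₁ P₂ => max (depth P₁) (depth P₂) + 1
  | .union P₁ P₂ => max (depth P₁) (depth P₂) + 1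
  | .minus P₁ P₂ => max (depth P₁) (depth P₂) + 1
  | .fe P₁ P₂ => max (depth P₁) (depth P₂) + 1
  | .fne P₁ P₂ => max (depth P₁) (depth P₂) + 1
  | .filter P _ => depth P + 1
  | .opt P₁ P₂ _ => max (depth P₁) (depth P₂) + 1

theorem depth_substGP (μ : Mapping) (P : GP) : depth (substGP μ P) = depth P := by
  induction P <;> simp [substGP, depth, *]

/-- The scope `sv` of a graph pattern. -/
def sv : GP → Finset Var
  | .bgp P => varsBGP P
  | .and P₁ P₂ => sv P₁ ∪ sv P₂
  | .union P₁ P₂ => sv P₁ ∪ sv P₂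
  | .minus P₁ _ => sv P₁
  | .fe P₁ _ => sv P₁
  | .fne P₁ _ => sv P₁
  | .filter P _ => sv P
  | .opt P₁ P₂ _ => sv P₁ ∪ sv P₂

/-- The variables `var(P)` occurring in a graph pattern. -/
def varsGP : GP → Finset Var
  | .bgp P => varsBGP P
  | .and P₁ P₂ => varsGP P₁ ∪ varsGP P₂
  | .union P₁ P₂ => varsGP P₁ ∪ varsGP P₂
  | .minus P₁ P₂ => varsGP P₁ ∪ varsGP P₂
  | .fe P₁ P₂ => varsGP P₁ ∪ varsGP P₂
  | .fne P₁ P₂ => varsGP P₁ ∪ varsGP P₂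
  | .filter P _ => varsGP P
  | .opt P₁ P₂ _ => varsGP P₁ ∪ varsGP P₂

/-- Evaluation `⟦P⟧_G` of SPARQL graph patterns over an RDF graph `G`. -/
def eval (G : Graph) : GP → Set Mapping
  | .bgp P => bgpEval G P
  | .and P₁ P₂ =>
      {μ | ∃ μ₁ ∈ eval G P₁, ∃ μ₂ ∈ eval G P₂, compat μ₁ μ₂ ∧ μ = munion μ₁ μ₂}
  | .union P₁ P₂ => eval G P₁ ∪ eval G P₂
  | .minus P₁ P₂ =>
      {μ ∈ eval G P₁ | ∀ μ' ∈ eval G P₂, ¬ compat μ μ' ∨ mdom μ ∩ mdom μ' = ∅}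
  | .fe P₁ P₂ =>
      {μ ∈ eval G P₁ | (eval G (substGP μ P₂)).Nonempty}
  | .fne P₁ P₂ =>
      {μ ∈ eval G P₁ | eval G (substGP μ P₂) = ∅}
  | .filter P R => {μ ∈ eval G P | R μ}
  | .opt P₁ P₂ R =>
      {μ | ∃ μ₁ ∈ eval G P₁, ∃ μ₂ ∈ eval G P₂,
          compat μ₁ μ₂ ∧ R (munion μ₁ μ₂) ∧ μ = munion μ₁ μ₂}
        ∪ {μ₁ ∈ eval G P₁ | ¬ ∃ μ₂ ∈ eval G P₂, compat μ₁ μ₂ ∧ R (munion μ₁ μ₂)}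
termination_by P => depth P
decreasing_by all_goals (simp [depth_substGP, depth]; try omega)

/-- A pattern contains no UNION and no OPT subpattern. -/
def NoUnionOpt : GP → Prop
  | .bgp _ => True
  | .and P₁ P₂ => NoUnionOpt P₁ ∧ NoUnionOpt P₂
  | .union _ _ => False
  | .minus P₁ P₂ => NoUnionOpt P₁ ∧ NoUnionOpt P₂
  | .fe P₁ P₂ => NoUnionOpt P₁ ∧ NoUnionOpt P₂
  | .fne P₁ P₂ => NoUnionOpt P₁ ∧ NoUnionOpt P₂
  | .filter P _ => NoUnionOpt P
  | .opt _ _ _ => False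

/-- Renaming of variables in a pattern term. -/
def renamePT (σ : Var → Var) : PTerm → PTerm
  | .inl t => .inl t
  | .inr v => .inr (σ v)

/-- Renaming of variables in a triple pattern. -/
def renameTP (σ : Var → Var) (t : TriplePat) : TriplePat :=
  (renamePT σ t.1, renamePT σ t.2.1, renamePT σ t.2.2)

/-- Renaming `Qσ` of variables in a BGP. -/
def renameBGP (σ : Var → Var) (P : BGP) : BGP := P.image (renameTP σ)

/-- Restriction of a mapping to a set of variables. -/
def restrict (μ : Mapping) (S : Finset Var) : Mapping :=
  fun x => if x ∈ S then μ x else none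


lemma mdom_munion (μ₁ μ₂ : Mapping) :
    mdom (munion μ₁ μ₂) = mdom μ₁ ∪ mdom μ₂ := by
  ext x
  simp only [mdom, munion, Set.mem_setOf_eq, Set.mem_union]
  cases h : μ₁ x <;> simp [h]

/-- Domain lemma: UNION/OPT-free patterns have `dom(μ) = sv(P)` for every
solution mapping `μ ∈ ⟦P⟧_G`. -/
lemma mdom_eq_sv (G : Graph) : ∀ (P : GP), NoUnionOpt P → ∀ μ ∈ eval G P,
    mdom μ = ↑(sv P) := by
  intro P
  induction P with
  | bgp P => intro _ μ hμ; rw [eval] at hμ; exact hμ.1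
  | and P₁ P₂ ih₁ ih₂ =>
      intro h μ hμ
      rw [eval] at hμ
      obtain ⟨μ₁, h1, μ₂, h2, _, rfl⟩ := hμ
      rw [mdom_munion, ih₁ h.1 μ₁ h1, ih₂ h.2 μ₂ h2]
      simp [sv]
  | union P₁ P₂ ih₁ ih₂ => intro h; exact h.elim
  | minus P₁ P₂ ih₁ ih₂ =>
      intro h μ hμ; rw [eval] at hμ; exact ih₁ h.1 μ hμ.1
  | fe P₁ P₂ ih₁ ih₂ =>
      intro h μ hμ; rw [eval] at hμ; exact ih₁ h.1 μ hμ.1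
  | fne P₁ P₂ ih₁ ih₂ =>
      intro h μ hμ; rw [eval] at hμ; exact ih₁ h.1 μ hμ.1
  | filter P R ih =>
      intro h μ hμ; rw [eval] at hμ; exact ih h μ hμ.1
  | opt P₁ P₂ R ih₁ ih₂ => intro h; exact h.elim

lemma restrict_munion_left (μ₁ μ₂ : Mapping) (S : Finset Var)
    (h : mdom μ₁ = ↑S) : restrict (munion μ₁ μ₂) S = μ₁ := by
  funext x
  by_cases hx : x ∈ S
  · have hd : μ₁ x ≠ none := by
      have : x ∈ mdom μ₁ := by rw [h]; exact_mod_cast hx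
      exact this
    cases h1 : μ₁ x with
    | none => exact absurd h1 hd
    | some a => simp [restrict, munion, hx, h1]
  · have hd : μ₁ x = none := by
      by_contra hc
      have : x ∈ mdom μ₁ := hc
      rw [h] at this; exact hx (by exact_mod_cast this)
    simp [restrict, hx, hd]

lemma restrict_munion_right (μ₁ μ₂ : Mapping) (S₁ S₂ : Finset Var)
    (h1 : mdom μ₁ = ↑S₁) (h2 : mdom μ₂ = ↑S₂) (hc : compat μ₁ μ₂) :
    restrict (munion μ₁ μ₂) S₂ = μ₂ := by
  funext x
  by_cases hx : x ∈ S₂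
  · cases ha : μ₁ x with
    | none => simp [restrict, munion, hx, ha]
    | some a =>
        have hd : μ₂ x ≠ none := by
          have : x ∈ mdom μ₂ := by rw [h2]; exact_mod_cast hx
          exact this
        cases hb : μ₂ x with
        | none => exact absurd hb hd
        | some b =>
            have := hc x a b ha hb
            simp [restrict, munion, hx, ha, hb, this]
  · have hd : μ₂ x = none := by
      by_contra hcn
      have : x ∈ mdom μ₂ := hcn
      rw [h2] at this; exact hx (by exact_mod_cast this)
    simp [restrict, hx, hd]

lemma compat_restrict (μ : Mapping) (S₁ S₂ : Finset Var) :
    compat (restrict μ S₁) (restrict μ S₂) := by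
  intro x a b ha hb
  simp only [restrict] at ha hb
  split at ha
  · split at hb
    · rw [ha] at hb; exact Option.some_injective _ hb
    · exact absurd hb (by simp)
  · exact absurd ha (by simp)

lemma munion_restrict (μ : Mapping) (S₁ S₂ : Finset Var)
    (h : mdom μ = ↑(S₁ ∪ S₂)) :
    munion (restrict μ S₁) (restrict μ S₂) = μ := by
  funext x
  by_cases h1 : x ∈ S₁
  · cases ha : μ x with
    | none => simp [munion, restrict, h1, ha]
    | some a => simp [munion, restrict, h1, ha]
  · by_cases h2 : x ∈ S₂
    · simp [munion, restrict, h1, h2]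
    · have hd : μ x = none := by
        by_contra hcn
        have : x ∈ mdom μ := hcn
        rw [h] at this
        simp at this
        tauto
      simp [munion, restrict, h1, h2, hd]

/-- For UNION- and OPT-free patterns `P₁, P₂`,
`μ ∈ ⟦AND(P₁,P₂)⟧_G` iff `dom(μ) = sv(P₁) ∪ sv(P₂)` and the restrictions of
`μ` to `sv(P₁)` and `sv(P₂)` belong to `⟦P₁⟧_G` and `⟦P₂⟧_G` respectively. -/
theorem and_mem_iff_restrict (P₁ P₂ : GP) (h₁ : NoUnionOpt P₁)
    (h₂ : NoUnionOpt P₂) (G : Graph) (μ : Mapping) :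
    μ ∈ eval G (.and P₁ P₂) ↔
      mdom μ = ↑(sv P₁ ∪ sv P₂) ∧
        restrict μ (sv P₁) ∈ eval G P₁ ∧ restrict μ (sv P₂) ∈ eval G P₂ := by
  rw [eval]
  constructor
  · rintro ⟨μ₁, hμ₁, μ₂, hμ₂, hc, rfl⟩
    have d₁ := mdom_eq_sv G P₁ h₁ μ₁ hμ₁
    have d₂ := mdom_eq_sv G P₂ h₂ μ₂ hμ₂
    refine ⟨?_, ?_, ?_⟩
    · rw [mdom_munion, d₁, d₂]; simp
    · rw [restrict_munion_left μ₁ μ₂ _ d₁]; exact hμ₁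
    · rw [restrict_munion_right μ₁ μ₂ _ _ d₁ d₂ hc]; exact hμ₂
  · rintro ⟨hd, hm₁, hm₂⟩
    exact ⟨restrict μ (sv P₁), hm₁, restrict μ (sv P₂), hm₂,
      compat_restrict μ _ _, (munion_restrict μ _ _ hd).symm⟩

end SparqlN3
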